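/- arXiv:2407.11598 — 5 statements merged into one kernel-verified Lean document; each statement's English description precedes it below -/
import Mathlib

section
/- Let K be a unital commutative associative algebra over a commutative ring R, realized on an R-module M, and let f, g be invertible R-linear endomorphisms of M. Then the isotope K^(f,g) is a unital algebra if and only if there exists an invertible w ∈ K such that the multiplication of K^(f,g) equals x ∗ y = x·w·y for all x, y; moreover this holds if and only if K^(f,g) is isomorphic to K as an R-algebra. -/
/-!
If `e` is an identity of `K^(f,g)`, then `e ∗ 1 = 1` says that `f e` is inverse to `g 1`,
so `g x = g 1 · f e · g x = g 1 · (e ∗ x) = g 1 · x`; symmetrically `f x = f 1 · x`, hence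
`x ∗ y = x · (f 1 · g 1) · y` with `f 1 · g 1` invertible. Conversely `w⁻¹` is the identity
of the Jordan isotope `K^(w)`, left multiplication by `w` is an isomorphism `K^(w) ≅ K`, and any
isomorphism onto `K` pulls the identity `1` of `K` back to an identity of `K^(f,g)`.
-/

section CommMonoid

variable {M : Type*} [CommMonoid M] {f g : M → M}

theorem apply_eq_apply_one_mul_of_forall_mul_eq {e : M} (he : ∀ x, f e * g x = x) (x : M) :
    g x = g 1 * x :=
  calc g x = g 1 * f e * g x := by rw [mul_comm (g 1), he 1, one_mul]
    _ = g 1 * x := by rw [mul_assoc, he x]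

theorem exists_unit_isotope_eq_mul_mul_of_isotope_one {e : M} (hl : ∀ x, f e * g x = x)
    (hr : ∀ x, f x * g e = x) : ∃ w : Mˣ, ∀ x y, f x * g y = x * w * y := by
  have hg := apply_eq_apply_one_mul_of_forall_mul_eq hl
  have hf := apply_eq_apply_one_mul_of_forall_mul_eq (f := g) (g := f) fun x => by
    rw [mul_comm, hr]
  have hinv : f 1 * g 1 * (g e * f e) = 1 := by
    calc f 1 * g 1 * (g e * f e) = (f 1 * g e) * (f e * g 1) := by ac_rfl
      _ = 1 := by rw [hl, hr, one_mul]
  exact ⟨⟨f 1 * g 1, g e * f e, hinv, by rw [mul_comm, hinv]⟩,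
    fun x y => by rw [hf, hg]; ac_rfl⟩

theorem isotope_one_of_isotope_eq_mul_mul {w : Mˣ} (hw : ∀ x y, f x * g y = x * w * y) (x : M) :
    f ↑w⁻¹ * g x = x ∧ f x * g ↑w⁻¹ = x := by
  simp [hw, mul_assoc]

theorem isotope_one_of_equiv (φ : M ≃ M) (hφ : ∀ x y, φ (f x * g y) = φ x * φ y) (x : M) :
    f (φ.symm 1) * g x = x ∧ f x * g (φ.symm 1) = x :=
  ⟨φ.injective (by simp [hφ]), φ.injective (by simp [hφ])⟩

end CommMonoid

theorem Units.mulLeftLinearEquiv_mul_mul {R K : Type*} [CommSemiring R] [CommSemiring K]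
    [Algebra R K] (w : Kˣ) (x y : K) :
    w.mulLeftLinearEquiv R K (x * w * y) =
      w.mulLeftLinearEquiv R K x * w.mulLeftLinearEquiv R K y := by
  simp only [Units.mulLeftLinearEquiv_apply]
  ring

/-- For a unital commutative associative R-algebra K and invertible f, g:
K^(f,g) is unital ↔ K^(f,g) is a Jordan isotope K^(w) ↔ K^(f,g) ≅ K. -/
theorem stmt4 {R K : Type*} [CommRing R] [CommRing K] [Algebra R K] (f g : K ≃ₗ[R] K) :
    ((∃ e : K, ∀ x : K, f e * g x = x ∧ f x * g e = x) ↔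
      ∃ w : Kˣ, ∀ x y : K, f x * g y = x * w * y) ∧
    ((∃ w : Kˣ, ∀ x y : K, f x * g y = x * w * y) ↔
      ∃ φ : K ≃ₗ[R] K, ∀ x y : K, φ (f x * g y) = φ x * φ y) := by
  have unital_to_jordan : (∃ e : K, ∀ x : K, f e * g x = x ∧ f x * g e = x) →
      ∃ w : Kˣ, ∀ x y : K, f x * g y = x * w * y := fun ⟨_, he⟩ =>
    exists_unit_isotope_eq_mul_mul_of_isotope_one (fun x => (he x).1) (fun x => (he x).2)
  refine ⟨⟨unital_to_jordan, fun ⟨w, hw⟩ => ⟨_, isotope_one_of_isotope_eq_mul_mul hw⟩⟩,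
    fun ⟨w, hw⟩ => ⟨w.mulLeftLinearEquiv R K, fun x y => ?_⟩,
    fun ⟨φ, hφ⟩ => unital_to_jordan ⟨_, isotope_one_of_equiv φ.toEquiv hφ⟩⟩
  rw [hw]
  exact Units.mulLeftLinearEquiv_mul_mul w x y
end

section
/- Let K be a unital commutative associative algebra on an R-module M, f, g invertible R-linear endomorphisms of M, and suppose K^(f,g) = K^(w) for some invertible w ∈ K (i.e. f(x)g(y) = xwy for all x,y). Then w⁻¹ is the unit element of K^(f,g), and there exist u, v ∈ K with w = uv, f = L(u), g = L(v), where L denotes left multiplication in K. -/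
/-- If K^(f,g) = K^(w), then w⁻¹ is the unit of K^(f,g) and f = L(u), g = L(v)
with w = uv. -/
theorem stmt5 {R K : Type*} [CommRing R] [CommRing K] [Algebra R K] (f g : K ≃ₗ[R] K)
    (w : Kˣ) (hw : ∀ x y : K, f x * g y = x * w * y) :
    (∀ x : K, f ((w⁻¹ : Kˣ) : K) * g x = x ∧ f x * g ((w⁻¹ : Kˣ) : K) = x) ∧
    ∃ u v : K, (w : K) = u * v ∧ (∀ x : K, f x = u * x) ∧ (∀ x : K, g x = v * x) := by
  have huv : f 1 * g 1 = (w : K) := by simpa using hw 1 1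
  have hf : ∀ x : K, f x = f 1 * x := by
    intro x
    have h1 : f x * g 1 = x * w := by simpa using hw x 1
    have h2 : g 1 * ((f 1 : K) * (w⁻¹ : Kˣ)) = 1 := by
      rw [← mul_assoc, mul_comm (g 1) (f 1 : K), huv]
      exact w.mul_inv
    calc f x = f x * (g 1 * ((f 1 : K) * (w⁻¹ : Kˣ))) := by rw [h2, mul_one]
      _ = (f x * g 1) * ((f 1 : K) * (w⁻¹ : Kˣ)) := by ring
      _ = x * w * ((f 1 : K) * (w⁻¹ : Kˣ)) := by rw [h1]
      _ = (f 1 : K) * x * ((w : K) * (w⁻¹ : Kˣ)) := by ring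
      _ = f 1 * x := by rw [w.mul_inv, mul_one]
  have hg : ∀ y : K, g y = g 1 * y := by
    intro y
    have h1 : f 1 * g y = (w : K) * y := by simpa using hw 1 y
    have h2 : f 1 * ((g 1 : K) * (w⁻¹ : Kˣ)) = 1 := by
      rw [← mul_assoc, huv]; exact w.mul_inv
    calc g y = g y * (f 1 * ((g 1 : K) * (w⁻¹ : Kˣ))) := by rw [h2, mul_one]
      _ = (f 1 * g y) * ((g 1 : K) * (w⁻¹ : Kˣ)) := by ring
      _ = (w : K) * y * ((g 1 : K) * (w⁻¹ : Kˣ)) := by rw [h1]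
      _ = (g 1 : K) * y * ((w : K) * (w⁻¹ : Kˣ)) := by ring
      _ = g 1 * y := by rw [w.mul_inv, mul_one]
  refine ⟨fun x => ⟨?_, ?_⟩, f 1, g 1, huv.symm, hf, hg⟩
  · rw [hw]
    calc ((w⁻¹ : Kˣ) : K) * w * x = ((w : K) * (w⁻¹ : Kˣ)) * x := by ring
      _ = x := by rw [w.mul_inv, one_mul]
  · rw [hw]
    calc x * (w : K) * ((w⁻¹ : Kˣ) : K) = x * ((w : K) * (w⁻¹ : Kˣ)) := by ring
      _ = x := by rw [w.mul_inv, mul_one]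
end

section
/- Let K/F be a cyclic Galois field extension of degree n with Galois group generated by τ. Then every F-linear endomorphism f of K can be written uniquely in the form f = Σ_{i=0}^{n-1} L(yᵢ)∘τⁱ for some y₀,…,y_{n-1} ∈ K, where L(y) denotes multiplication by y on K. -/
/-!
Viewed as a `K`-vector space through post-multiplication, `End_F(K)` has dimension
`[K : F] = n`, and by Dedekind's lemma the `n` automorphisms `τ⁰, …, τⁿ⁻¹` are `K`-linearly
independent in it. Hence they form a `K`-basis, and `Σ L(yᵢ) ∘ τⁱ = Σ yᵢ • τⁱ` is the
expansion of `f` in that basis.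
-/

open Module

theorem Module.Basis.existsUnique_eq_sum_smul {ι R M : Type*} [Fintype ι] [Semiring R]
    [AddCommMonoid M] [Module R M] (b : Basis ι R M) (x : M) :
    ∃! c : ι → R, x = ∑ i, c i • b i := by
  simpa only [b.equivFun_symm_apply, eq_comm] using b.equivFun.symm.bijective.existsUnique x

theorem LinearIndependent.existsUnique_eq_sum_smul_of_card_eq_finrank {ι K V : Type*}
    [Fintype ι] [DivisionRing K] [AddCommGroup V] [Module K V] [FiniteDimensional K V]
    {b : ι → V} (hb : LinearIndependent K b) (hcard : Fintype.card ι = finrank K V) (x : V) :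
    ∃! c : ι → K, x = ∑ i, c i • b i := by
  simpa only [Basis.coe_mk] using
    (Basis.mk hb (hb.span_eq_top_of_card_eq_finrank' hcard).ge).existsUnique_eq_sum_smul x

theorem AlgEquiv.linearIndependent_pow_toLinearMap {F K : Type*} [Field F] [Field K]
    [Algebra F K] (τ : K ≃ₐ[F] K) :
    LinearIndependent K fun i : Fin (orderOf τ) => (τ ^ (i : ℕ)).toLinearMap :=
  (linearIndependent_toLinearMap F K K).comp (fun i : Fin (orderOf τ) => (τ ^ (i : ℕ)).toAlgHom)
    fun i j hij => Fin.ext <| pow_injOn_Iio_orderOf i.is_lt j.is_lt <|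
      AlgEquiv.coe_toAlgHom_injective hij

/-- Every F-linear endomorphism of a degree-n cyclic Galois extension K/F with
Galois group generated by τ is uniquely of the form Σᵢ L(yᵢ)∘τⁱ. -/
theorem stmt8 {F K : Type*} [Field F] [Field K] [Algebra F K] [FiniteDimensional F K]
    [IsGalois F K] (n : ℕ) (hn : Module.finrank F K = n)
    (τ : K ≃ₐ[F] K) (hτ : ∀ σ : K ≃ₐ[F] K, σ ∈ Subgroup.zpowers τ)
    (f : K →ₗ[F] K) :
    ∃! y : Fin n → K,
      f = ∑ i : Fin n, LinearMap.mul F K (y i) ∘ₗ (τ ^ (i : ℕ)).toLinearMap := by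
  obtain rfl : n = orderOf τ := by
    rw [orderOf_eq_card_of_forall_mem_zpowers hτ, IsGalois.card_aut_eq_finrank, hn]
  have hcard : Fintype.card (Fin (orderOf τ)) = finrank K (K →ₗ[F] K) := by
    rw [Fintype.card_fin, finrank_linearMap_self, hn]
  -- `LinearMap.mul F K y ∘ₗ g` and `y • g` are definitionally equal.
  exact τ.linearIndependent_pow_toLinearMap.existsUnique_eq_sum_smul_of_card_eq_finrank hcard f
end

section
/- Let K/F be a cyclic Galois field extension of degree n with Galois group generated by τ, and let f = Σ_{i=0}^{n-1} L(yᵢ)∘τⁱ ∈ End_F(K). Then f is invertible if and only if the element y₀ + y₁t + ⋯ + y_{n-1}t^{n-1} of the cyclic algebra (K/F, τ, 1) has nonzero reduced norm, i.e., is invertible in (K/F, τ, 1). -/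
/-!
Sending `y` to `∑ᵢ L(yᵢ) ∘ τⁱ` is an `F`-linear map `Φ` from the cyclic algebra `(K/F, τ, 1)` to
`End_F(K)` which turns the twisted convolution product into composition. By Dedekind's lemma the
powers `τⁱ`, `i < n`, are `K`-linearly independent, so `Φ` is injective, and both sides have
`F`-dimension `n²`, so `Φ` is an isomorphism of algebras. Hence `Φ y` is invertible exactly when
`y` is.
-/

open Module

section OrderOf

variable {G : Type*} [Monoid G] {n : ℕ} [NeZero n] {g : G}

lemma pow_val_add_of_orderOf_eq (h : orderOf g = n) (a b : ZMod n) :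
    g ^ (a + b).val = g ^ a.val * g ^ b.val := by
  have hmod := pow_mod_orderOf g (a.val + b.val)
  rw [h] at hmod
  rw [ZMod.val_add, hmod, pow_add]

lemma pow_val_injective_of_orderOf_eq (h : orderOf g = n) :
    Function.Injective fun i : ZMod n => g ^ i.val := fun i j hij =>
  ZMod.val_injective n <|
    pow_injOn_Iio_orderOf (by simpa [h] using ZMod.val_lt i) (by simpa [h] using ZMod.val_lt j) hij

end OrderOf

lemma orderOf_eq_finrank_of_forall_mem_zpowers {F K : Type*} [Field F] [Field K] [Algebra F K]
    [FiniteDimensional F K] [IsGalois F K] {τ : K ≃ₐ[F] K}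
    (hτ : ∀ σ : K ≃ₐ[F] K, σ ∈ Subgroup.zpowers τ) : orderOf τ = finrank F K := by
  rw [orderOf_eq_card_of_forall_mem_zpowers hτ, IsGalois.card_aut_eq_finrank]

namespace CyclicAlgebra

variable {F K : Type*} [Field F] [Field K] [Algebra F K] {n : ℕ} [NeZero n] (τ : K ≃ₐ[F] K)

/-- The product of `∑ yᵢ tⁱ` and `∑ zᵢ tⁱ` in `K[t; τ]/(tⁿ - 1)`, elements being stored as their
coefficient functions `ZMod n → K`. -/
def mul (y z : ZMod n → K) : ZMod n → K :=
  fun k => ∑ j : ZMod n, y j * (τ ^ j.val) (z (k - j))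

def one (n : ℕ) (K : Type*) [Zero K] [One K] : ZMod n → K :=
  fun k => if k = 0 then 1 else 0

variable (n) in
noncomputable def toEnd : (ZMod n → K) →ₗ[F] Module.End F K :=
  ∑ i : ZMod n, (LinearMap.llcomp F K K K).flip (τ ^ i.val).toLinearMap ∘ₗ
    LinearMap.mul F K ∘ₗ LinearMap.proj i

lemma toEnd_apply (y : ZMod n → K) :
    toEnd n τ y = ∑ i : ZMod n, LinearMap.mul F K (y i) ∘ₗ (τ ^ i.val).toLinearMap := by
  simp only [toEnd, LinearMap.sum_apply, LinearMap.comp_apply, LinearMap.proj_apply,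
    LinearMap.flip_apply, LinearMap.llcomp_apply']

lemma toEnd_apply_apply (y : ZMod n → K) (x : K) :
    toEnd n τ y x = ∑ i : ZMod n, y i * (τ ^ i.val) x := by
  simp [toEnd_apply, LinearMap.sum_apply]

variable {τ}

lemma toEnd_mul (hτ : orderOf τ = n) (y z : ZMod n → K) :
    toEnd n τ (mul τ y z) = toEnd n τ y * toEnd n τ z := by
  refine LinearMap.ext fun x => ?_
  simp only [Module.End.mul_apply, toEnd_apply_apply, mul, map_sum, Finset.sum_mul]
  conv_lhs => rw [Finset.sum_comm]
  conv_rhs => rw [Finset.sum_comm]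
  refine Finset.sum_congr rfl fun j _ => Fintype.sum_equiv (Equiv.subRight j) _ _ fun k => ?_
  have hpow : (τ ^ j.val) ((τ ^ (k - j).val) x) = (τ ^ k.val) x := by
    rw [← AlgEquiv.mul_apply, ← pow_val_add_of_orderOf_eq hτ, add_sub_cancel]
  simp only [Equiv.subRight_apply, map_mul, hpow, mul_assoc]

lemma toEnd_one : toEnd n τ (one n K) = 1 := by
  refine LinearMap.ext fun x => ?_
  rw [toEnd_apply_apply, Finset.sum_eq_single (0 : ZMod n)] <;> simp +contextual [one]

lemma toEnd_injective (hτ : orderOf τ = n) : Function.Injective (toEnd n τ) := by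
  have hli : LinearIndependent K fun i : ZMod n => ⇑((τ ^ i.val : K ≃ₐ[F] K) : K →* K) :=
    (linearIndependent_monoidHom K K).comp _ fun i j hij =>
      pow_val_injective_of_orderOf_eq hτ (AlgEquiv.ext (DFunLike.congr_fun hij ·))
  rw [← LinearMap.ker_eq_bot, LinearMap.ker_eq_bot']
  intro w hw
  refine funext (Fintype.linearIndependent_iff.mp hli w (funext fun x => ?_))
  simpa [toEnd_apply_apply, Finset.sum_apply] using DFunLike.congr_fun hw x

lemma toEnd_bijective [FiniteDimensional F K] (hτ : orderOf τ = n) (hn : finrank F K = n) :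
    Function.Bijective (toEnd n τ) := by
  refine ⟨toEnd_injective hτ, (LinearMap.injective_iff_surjective_of_finrank_eq_finrank ?_).mp
    (toEnd_injective hτ)⟩
  simp [Module.finrank_linearMap, Module.finrank_pi_fintype, hn, ZMod.card]

lemma mul_eq_one_iff (hτ : orderOf τ = n) (y z : ZMod n → K) :
    mul τ y z = one n K ↔ toEnd n τ y * toEnd n τ z = 1 := by
  rw [← toEnd_mul hτ, ← (toEnd_injective hτ).eq_iff, toEnd_one]

lemma isUnit_toEnd_iff [FiniteDimensional F K] (hτ : orderOf τ = n) (hn : finrank F K = n)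
    (y : ZMod n → K) :
    IsUnit (toEnd n τ y) ↔ ∃ z, mul τ y z = one n K ∧ mul τ z y = one n K := by
  simp only [isUnit_iff_exists, (toEnd_bijective hτ hn).surjective.exists, mul_eq_one_iff hτ]

end CyclicAlgebra

open CyclicAlgebra in
/-- f = Σᵢ L(yᵢ)∘τⁱ is invertible iff y₀ + y₁t + ⋯ + y_{n-1}t^{n-1} is invertible
in the cyclic algebra (K/F,τ,1), modelled as ZMod n → K with twisted convolution. -/
theorem stmt9 {F K : Type*} [Field F] [Field K] [Algebra F K] [FiniteDimensional F K]
    [IsGalois F K] (n : ℕ) [NeZero n] (hn : Module.finrank F K = n)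
    (τ : K ≃ₐ[F] K) (hτ : ∀ σ : K ≃ₐ[F] K, σ ∈ Subgroup.zpowers τ)
    (y : ZMod n → K) (f : K →ₗ[F] K)
    (hf : f = ∑ i : ZMod n, LinearMap.mul F K (y i) ∘ₗ (τ ^ i.val).toLinearMap) :
    Function.Bijective f ↔
      ∃ z : ZMod n → K,
        (fun k => ∑ j : ZMod n, y j * (τ ^ j.val) (z (k - j))) =
          (fun k : ZMod n => if k = 0 then (1 : K) else 0) ∧
        (fun k => ∑ j : ZMod n, z j * (τ ^ j.val) (y (k - j))) =
          (fun k : ZMod n => if k = 0 then (1 : K) else 0) := by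
  have hord : orderOf τ = n := hn ▸ orderOf_eq_finrank_of_forall_mem_zpowers hτ
  rw [hf, ← toEnd_apply, ← Module.End.isUnit_iff]
  exact isUnit_toEnd_iff hord hn y
end

section
/- Let K be a unital commutative associative F-algebra on V whose norm N(x) = det(L(x)) permits composition (N(xy) = N(x)N(y)), and let f, g ∈ GL(V), u, v ∈ K×, σ ∈ Aut_F(K). If f' = L(v⁻¹)∘σ∘f∘σ⁻¹∘L(uv) and g' = L(v⁻¹)∘σ∘g∘σ⁻¹∘L(uv), then det(f') = det(f)·N(u) and det(g') = det(g)·N(u). In particular, the pair (det f mod N(K×), det g mod N(K×)) is an isomorphism invariant of K^(f,g). -/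
lemma stmt18_aux {F K : Type*} [Field F] [CommRing K] [Algebra F K] [FiniteDimensional F K]
    (N : K → F) (hN : ∀ x : K, N x = LinearMap.det (LinearMap.mul F K x))
    (hcomp : ∀ x y : K, N (x * y) = N x * N y)
    (f f' : K ≃ₗ[F] K) (u v : Kˣ) (σ : K ≃ₐ[F] K)
    (hf' : ∀ x : K, f' x = ((v⁻¹ : Kˣ) : K) * σ (f (σ.symm ((u : K) * (v : K) * x)))) :
    LinearMap.det f'.toLinearMap = LinearMap.det f.toLinearMap * N (u : K) := by
  have hcompose : f'.toLinearMap =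
      (LinearMap.mul F K ((v⁻¹ : Kˣ) : K)) ∘ₗ σ.toLinearMap ∘ₗ f.toLinearMap ∘ₗ
        σ.symm.toLinearMap ∘ₗ (LinearMap.mul F K ((u : K) * (v : K))) := by
    ext x
    simp [hf' x]
  have hσ : LinearMap.det σ.toLinearMap * LinearMap.det σ.symm.toLinearMap = 1 := by
    rw [← LinearMap.det_comp]
    have : σ.toLinearMap ∘ₗ σ.symm.toLinearMap = LinearMap.id := by
      ext x; simp
    rw [this, LinearMap.det_id]
  have hNu : N ((v⁻¹ : Kˣ) : K) * N ((u : K) * (v : K)) = N (u : K) := by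
    rw [← hcomp]
    congr 1
    calc ((v⁻¹ : Kˣ) : K) * ((u : K) * (v : K)) = (u : K) * (((v⁻¹ : Kˣ) : K) * (v : K)) := by ring
    _ = (u : K) := by rw [Units.inv_mul, mul_one]
  rw [hcompose]
  simp only [LinearMap.det_comp]
  rw [← hN, ← hN]
  ring_nf
  ring_nf at hσ hNu
  calc N ((v⁻¹:Kˣ):K) * LinearMap.det σ.toLinearMap * LinearMap.det f.toLinearMap *
        LinearMap.det σ.symm.toLinearMap * N ((u:K)*(v:K))
      = LinearMap.det f.toLinearMap * (N ((v⁻¹:Kˣ):K) * N ((u:K)*(v:K))) *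
        (LinearMap.det σ.toLinearMap * LinearMap.det σ.symm.toLinearMap) := by ring
    _ = LinearMap.det f.toLinearMap * N (u:K) := by rw [hNu, hσ]; ring

/-- If the norm N(x) = det L(x) of a unital commutative associative F-algebra K
permits composition, and f' = L(v⁻¹)σfσ⁻¹L(uv), g' = L(v⁻¹)σgσ⁻¹L(uv), then
det f' = det f · N(u) and det g' = det g · N(u). -/
theorem stmt18 {F K : Type*} [Field F] [CommRing K] [Algebra F K] [FiniteDimensional F K]
    (N : K → F) (hN : ∀ x : K, N x = LinearMap.det (LinearMap.mul F K x))
    (hcomp : ∀ x y : K, N (x * y) = N x * N y)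
    (f g f' g' : K ≃ₗ[F] K) (u v : Kˣ) (σ : K ≃ₐ[F] K)
    (hf' : ∀ x : K, f' x = ((v⁻¹ : Kˣ) : K) * σ (f (σ.symm ((u : K) * (v : K) * x))))
    (hg' : ∀ x : K, g' x = ((v⁻¹ : Kˣ) : K) * σ (g (σ.symm ((u : K) * (v : K) * x)))) :
    LinearMap.det f'.toLinearMap = LinearMap.det f.toLinearMap * N (u : K) ∧
    LinearMap.det g'.toLinearMap = LinearMap.det g.toLinearMap * N (u : K) :=
  ⟨stmt18_aux N hN hcomp f f' u v σ hf', stmt18_aux N hN hcomp g g' u v σ hg'⟩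
end
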